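/- arXiv:2503.13663 — 8 statements merged into one kernel-verified Lean document; each statement's English description precedes it below -/
import Mathlib

section
/- Let φ : [1]^m → [1]^n be a surjective, interval-preserving monotone function, and let {b, b'} be an edge in [1]^n, i.e., b' is an immediate successor of b in [1]^n. Then there exist x, y ∈ [1]^m with y an immediate successor of x, φ(x) = b, and φ(y) = b'. -/
/-- A function between preorders is interval-preserving if the image of every
(nonempty) interval is an interval. -/
def IsIntervalPreserving {α β : Type*} [Preorder α] [Preorder β] (f : α → β) : Prop :=
  ∀ p q : α, p ≤ q → ∃ a b : β, f '' Set.Icc p q = Set.Icc a b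

lemma covBy_update_aux {m : ℕ} (x : Fin m → Bool) (i : Fin m) (hx : x i = false) :
    x ⋖ Function.update x i true := by
  constructor
  · refine lt_of_le_of_ne ?_ ?_
    · intro j
      rcases eq_or_ne j i with rfl | h
      · simp [hx]
      · simp [Function.update_of_ne h]
    · intro h
      have := congrFun h i
      simp [hx] at this
  · intro w hw1 hw2
    have hle1 : x ≤ w := hw1.le
    have hle2 : w ≤ Function.update x i true := hw2.le
    have hwj : ∀ j, j ≠ i → w j = x j := fun j hj =>
      le_antisymm (by simpa [Function.update_of_ne hj] using hle2 j) (hle1 j)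
    cases hwi : w i
    · apply hw1.ne
      funext j
      rcases eq_or_ne j i with rfl | h
      · rw [hx, hwi]
      · exact (hwj j h).symm
    · apply hw2.ne'
      funext j
      rcases eq_or_ne j i with rfl | h
      · simp [hwi]
      · simp [hwj j h, Function.update_of_ne h]

lemma stmt6_key {m n : ℕ} (φ : (Fin m → Bool) → (Fin n → Bool)) (hm : Monotone φ)
    (b b' : Fin n → Bool) (hbb : b ⋖ b') :
    ∀ k (x y : Fin m → Bool), (Finset.univ.filter fun i => x i ≠ y i).card ≤ k →
      x ≤ y → φ x = b → φ y = b' →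
      ∃ x' y', x' ⋖ y' ∧ φ x' = b ∧ φ y' = b' := by
  intro k
  induction k with
  | zero =>
      intro x y hcard hxy hx hy
      have : x = y := by
        funext i
        by_contra h
        have : i ∈ Finset.univ.filter fun i => x i ≠ y i := by simp [h]
        have := Finset.card_pos.mpr ⟨i, this⟩
        omega
      exact absurd (hx ▸ hy ▸ congrArg φ this) hbb.ne
  | succ k ih =>
      intro x y hcard hxy hx hy
      have hne : x ≠ y := fun h => hbb.ne (hx ▸ hy ▸ h ▸ rfl)
      obtain ⟨i, hi⟩ : ∃ i, x i ≠ y i := by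
        by_contra h
        push_neg at h
        exact hne (funext h)
      have hxi : x i = false ∧ y i = true := by
        have := hxy i
        revert hi this
        cases x i <;> cases y i <;> simp
      set z := Function.update x i true with hz
      have hcov : x ⋖ z := covBy_update_aux x i hxi.1
      have hzy : z ≤ y := by
        intro j
        rcases eq_or_ne j i with rfl | h
        · simp [hz, hxi.2]
        · simpa [hz, Function.update_of_ne h] using hxy j
      have hb_le : b ≤ φ z := hx ▸ hm hcov.le
      have hle_b' : φ z ≤ b' := hy ▸ hm hzy
      rcases eq_or_ne (φ z) b' with hzb' | hzb'
      · exact ⟨x, z, hcov, hx, hzb'⟩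
      · have hzb : φ z = b := by
          by_contra h
          exact hbb.2 (lt_of_le_of_ne hb_le (Ne.symm h)) (lt_of_le_of_ne hle_b' hzb')
        apply ih z y ?_ hzy hzb hy
        have hsub : (Finset.univ.filter fun j => z j ≠ y j) ⊆
            (Finset.univ.filter fun j => x j ≠ y j).erase i := by
          intro j hj
          simp only [Finset.mem_filter, Finset.mem_univ, true_and] at hj
          rcases eq_or_ne j i with rfl | h
          · exact absurd (by simp [hz, hxi.2]) hj
          · refine Finset.mem_erase.mpr ⟨h, ?_⟩
            simpa [hz, Function.update_of_ne h] using hj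
        have himem : i ∈ Finset.univ.filter fun j => x j ≠ y j := by simp [hi]
        have := Finset.card_le_card hsub
        rw [Finset.card_erase_of_mem himem] at this
        omega

/-- Given a surjective interval-preserving monotone `φ : [1]^m → [1]^n` and
an edge `{b, b'}` (with `b'` an immediate successor of `b`) in `[1]^n`, there exist
`x, y` in `[1]^m` with `y` an immediate successor of `x`, `φ x = b` and `φ y = b'`. -/
theorem stmt_6 {m n : ℕ} (φ : (Fin m → Bool) → (Fin n → Bool)) (hm : Monotone φ)
    (hs : Function.Surjective φ) (hip : IsIntervalPreserving φ)
    (b b' : Fin n → Bool) (hbb : b ⋖ b') :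
    ∃ x y : Fin m → Bool, x ⋖ y ∧ φ x = b ∧ φ y = b' := by
  obtain ⟨x0, hx0⟩ := hs b
  obtain ⟨y0, hy0⟩ := hs b'
  have hpq : x0 ≤ x0 ⊔ y0 := le_sup_left
  obtain ⟨a, c, hac⟩ := hip x0 (x0 ⊔ y0) hpq
  have hbmem : b ∈ Set.Icc a c := hac ▸ ⟨x0, ⟨le_refl _, hpq⟩, hx0⟩
  have hqmem : φ (x0 ⊔ y0) ∈ Set.Icc a c := hac ▸ ⟨x0 ⊔ y0, ⟨hpq, le_refl _⟩, rfl⟩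
  have hb'mem : b' ∈ Set.Icc a c :=
    ⟨hbmem.1.trans hbb.le, le_trans (hy0 ▸ hm (le_sup_right : y0 ≤ x0 ⊔ y0)) hqmem.2⟩
  obtain ⟨y1, hy1mem, hy1⟩ : ∃ u ∈ Set.Icc x0 (x0 ⊔ y0), φ u = b' := by
    have := hac ▸ hb'mem
    exact this
  exact stmt6_key φ hm b b' hbb _ x0 y1 le_rfl hy1mem.1 hx0 hy1
end

section
/- Every surjective, interval-preserving monotone function φ : [1]^m → [1]^n admits a section in the category of interval-preserving monotone functions: there exists an interval-preserving monotone function s : [1]^n → [1]^m with φ ∘ s = id. -/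
/-!
Take `b` minimal with `φ b = ⊤`, then `a ≤ b` maximal with `φ a = ⊥`; as `φ` preserves
intervals, it maps `[a, b]` onto the whole cube. Raising `a` (resp. lowering `b`) at a coordinate
`i` free in `[a, b]` gives points `aᵢ`, `bᵢ` with `φ aᵢ ≠ ⊥` and `φ bᵢ ≠ ⊤` by extremality;
writing `(φ bᵢ)ᶜ = φ z` with `z ∈ [a, b]` and splitting on `z i` shows `φ bᵢ ≤ (φ aᵢ)ᶜ`. Each
atom of the target cube, say the `j`-th, equals `φ aᵢ` for some free `i =: e j`, and then the
face of `[a, b]` through `a` spanned by the coordinates `e j` is mapped identically onto the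
target cube.
-/

open Set Function

theorem IsIntervalPreserving.image_Icc {α β : Type*} [Preorder α] [PartialOrder β] {f : α → β}
    (hf : Monotone f) (hip : IsIntervalPreserving f) {p q : α} (hpq : p ≤ q) :
    f '' Icc p q = Icc (f p) (f q) := by
  obtain ⟨c, d, hcd⟩ := hip p q hpq
  have hleast : IsLeast (Icc c d) (f p) := hcd ▸ hf.map_isLeast (isLeast_Icc hpq)
  have hgreatest : IsGreatest (Icc c d) (f q) := hcd ▸ hf.map_isGreatest (isGreatest_Icc hpq)
  have hc : c ≤ d := nonempty_Icc.1 ⟨_, hleast.1⟩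
  rw [hcd, (isLeast_Icc hc).unique hleast, (isGreatest_Icc hc).unique hgreatest]

theorem OrderEmbedding.isIntervalPreserving {α β : Type*} [Preorder α] [Preorder β] (f : α ↪o β)
    (hf : (range f).OrdConnected) : IsIntervalPreserving f := by
  refine fun p q hpq =>
    ⟨f p, f q, Subset.antisymm (image_subset_iff.2 fun x hx => ?_) fun z hz => ?_⟩
  · exact ⟨f.monotone hx.1, f.monotone hx.2⟩
  · obtain ⟨x, rfl⟩ := hf.out (mem_range_self p) (mem_range_self q) hz
    exact ⟨x, ⟨f.le_iff_le.1 hz.1, f.le_iff_le.1 hz.2⟩, rfl⟩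

section Face

variable {ι κ α : Type*} [PartialOrder α] (e : κ ↪ ι) (a : ι → α)

/-- The face of `ι → α` through `a` whose free coordinates are those in the range of `e`. -/
noncomputable def faceEmbedding : (κ → α) ↪o (ι → α) :=
  OrderEmbedding.ofMapLEIff (fun y => extend e y a) fun y y' => by
    refine ⟨fun h j => ?_, fun h i => ?_⟩
    · simpa [e.injective.extend_apply] using h (e j)
    · by_cases hi : ∃ j, e j = i
      · obtain ⟨j, rfl⟩ := hi
        simpa [e.injective.extend_apply] using h j
      · simp [extend_apply' _ _ _ hi]

variable {e a}

@[simp]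
theorem faceEmbedding_apply_self (y : κ → α) (j : κ) : faceEmbedding e a y (e j) = y j :=
  e.injective.extend_apply y a j

theorem faceEmbedding_apply_of_forall_ne (y : κ → α) {i : ι} (hi : ∀ j, e j ≠ i) :
    faceEmbedding e a y i = a i :=
  extend_apply' _ _ _ fun ⟨j, hj⟩ => hi j hj

theorem faceEmbedding_mem_Icc {b : ι → α} (hab : a ≤ b) {y : κ → α}
    (hy : ∀ j, y j ∈ Icc (a (e j)) (b (e j))) : faceEmbedding e a y ∈ Icc a b := by
  suffices ∀ i, faceEmbedding e a y i ∈ Icc (a i) (b i) from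
    ⟨fun i => (this i).1, fun i => (this i).2⟩
  intro i
  by_cases hi : ∃ j, e j = i
  · obtain ⟨j, rfl⟩ := hi
    simpa using hy j
  · rw [faceEmbedding_apply_of_forall_ne y (not_exists.1 hi)]
    exact ⟨le_rfl, hab i⟩

theorem ordConnected_range_faceEmbedding : (range (faceEmbedding e a)).OrdConnected := by
  refine ⟨fun _ ⟨p, hp⟩ _ ⟨q, hq⟩ z hz => ⟨z ∘ e, funext fun i => ?_⟩⟩
  by_cases hi : ∃ j, e j = i
  · obtain ⟨j, rfl⟩ := hi
    simp
  · have hne := not_exists.1 hi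
    have h₁ := hz.1 i
    have h₂ := hz.2 i
    rw [← hp, faceEmbedding_apply_of_forall_ne p hne] at h₁
    rw [← hq, faceEmbedding_apply_of_forall_ne q hne] at h₂
    rw [faceEmbedding_apply_of_forall_ne _ hne]
    exact le_antisymm h₁ h₂

end Face

section SpanningInterval

variable {ι β : Type*} [DecidableEq ι] [BooleanAlgebra β] {φ : (ι → Bool) → β} {a b : ι → Bool}

theorem exists_map_update_eq_of_isAtom (hφ : Monotone φ) (hsurj : SurjOn φ (Icc a b) univ)
    (ha : Maximal (fun x => x ≤ b ∧ φ x = ⊥) a) {t : β} (ht : IsAtom t) :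
    ∃ i, a i = false ∧ b i = true ∧ φ (update a i true) = t := by
  obtain ⟨x, hx, rfl⟩ := hsurj (mem_univ t)
  obtain ⟨i, hi⟩ : ∃ i, x i ≠ a i := ne_iff.1 fun h => ht.1 (h ▸ ha.prop.2)
  obtain ⟨hai, hxi⟩ := Bool.lt_iff.1 ((hx.1 i).lt_of_ne' hi)
  have hbi : b i = true := by simpa [hxi, Bool.le_iff_imp] using hx.2 i
  have hlex : update a i true ≤ x := update_le_iff.2 ⟨hxi.ge, fun j _ => hx.1 j⟩
  have hne : φ (update a i true) ≠ ⊥ := fun h =>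
    ha.not_prop_of_gt (lt_update_self_iff.2 (by simp [hai]))
      ⟨update_le_iff.2 ⟨hbi.ge, fun j _ => ha.prop.1 j⟩, h⟩
  exact ⟨i, hai, hbi, ((ht.le_iff.1 (hφ hlex)).resolve_left hne)⟩

theorem map_update_le_compl_map_update (hφ : Monotone φ) (hsurj : SurjOn φ (Icc a b) univ)
    (hb : Minimal (fun x => φ x = ⊤) b) {i : ι} (hbi : b i = true) :
    φ (update b i false) ≤ (φ (update a i true))ᶜ := by
  obtain ⟨z, hz, hφz⟩ := hsurj (mem_univ (φ (update b i false))ᶜ)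
  cases hzi : z i
  · have hle : z ≤ update b i false := le_update_iff.2 ⟨hzi.le, fun j _ => hz.2 j⟩
    have htop : φ (update b i false) = ⊤ := compl_le_self.1 (hφz ▸ hφ hle)
    exact absurd htop (hb.not_prop_of_lt (update_lt_self_iff.2 (by simp [hbi])))
  · have hle : update a i true ≤ z := update_le_iff.2 ⟨hzi.ge, fun j _ => hz.1 j⟩
    exact le_compl_comm.1 (hφz ▸ hφ hle)

end SpanningInterval

theorem exists_surjOn_Icc_maximal_minimal {ι β : Type*} [Finite ι] [PartialOrder β]
    [BoundedOrder β] {φ : (ι → Bool) → β} (hφ : Monotone φ) (hs : Surjective φ)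
    (hip : IsIntervalPreserving φ) :
    ∃ a b, SurjOn φ (Icc a b) univ ∧ Maximal (fun x => x ≤ b ∧ φ x = ⊥) a ∧
      Minimal (fun x => φ x = ⊤) b := by
  have hbot : φ ⊥ = ⊥ := by
    obtain ⟨x, hx⟩ := hs ⊥
    exact le_bot_iff.1 (hx ▸ hφ bot_le)
  obtain ⟨b, hb⟩ := exists_minimal_of_wellFoundedLT _ (hs ⊤)
  obtain ⟨a, -, ha⟩ := exists_maximal_ge_of_wellFoundedGT (fun x => x ≤ b ∧ φ x = ⊥) ⊥
    ⟨bot_le, hbot⟩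
  refine ⟨a, b, ?_, ha, hb⟩
  rw [SurjOn, hip.image_Icc hφ ha.prop.1, ha.prop.2, hb.prop, Icc_bot_top]

theorem exists_faceEmbedding_comp_eq_id {ι κ : Type*} [DecidableEq ι] [DecidableEq κ]
    {φ : (ι → Bool) → (κ → Bool)} {a b : ι → Bool} (hφ : Monotone φ)
    (hsurj : SurjOn φ (Icc a b) univ) (ha : Maximal (fun x => x ≤ b ∧ φ x = ⊥) a)
    (hb : Minimal (fun x => φ x = ⊤) b) :
    ∃ e : κ ↪ ι, φ ∘ ⇑(faceEmbedding e a) = id := by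
  choose e hea heb he using fun j : κ =>
    exists_map_update_eq_of_isAtom hφ hsurj ha (Pi.isAtom_single (i := j) (isAtom_top (α := Bool)))
  have he_inj : Injective e := fun j j' h => by
    by_contra hne
    have := congrFun ((he j).symm.trans (h ▸ he j')) j
    simp [update_of_ne hne] at this
  refine ⟨⟨e, he_inj⟩, funext fun y => funext fun j => ?_⟩
  have hmem := faceEmbedding_mem_Icc (e := ⟨e, he_inj⟩) ha.prop.1 (y := y) fun j =>
    ⟨by simp [hea j], by simp [heb j]⟩
  change φ (faceEmbedding ⟨e, he_inj⟩ a y) j = y j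
  cases hy : y j
  · have hle : faceEmbedding ⟨e, he_inj⟩ a y ≤ update b (e j) false :=
      le_update_iff.2 ⟨((faceEmbedding_apply_self y j).trans hy).le, fun i _ => hmem.2 i⟩
    have := (hφ hle).trans (map_update_le_compl_map_update hφ hsurj hb (heb j)) j
    simpa [he j, Bool.le_iff_imp] using this
  · have hle : update a (e j) true ≤ faceEmbedding ⟨e, he_inj⟩ a y :=
      update_le_iff.2 ⟨((faceEmbedding_apply_self y j).trans hy).ge, fun i _ => hmem.1 i⟩
    have := hφ hle j
    simpa [he j, Bool.le_iff_imp] using this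

/-- Every surjective interval-preserving monotone function
`φ : [1]^m → [1]^n` admits a section that is itself monotone and interval-preserving. -/
theorem stmt_7 {m n : ℕ} (φ : (Fin m → Bool) → (Fin n → Bool)) (hm : Monotone φ)
    (hs : Function.Surjective φ) (hip : IsIntervalPreserving φ) :
    ∃ s : (Fin n → Bool) → (Fin m → Bool),
      Monotone s ∧ IsIntervalPreserving s ∧ φ ∘ s = id := by
  obtain ⟨a, b, hsurj, ha, hb⟩ := exists_surjOn_Icc_maximal_minimal hm hs hip
  obtain ⟨e, he⟩ := exists_faceEmbedding_comp_eq_id hm hsurj ha hb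
  exact ⟨faceEmbedding e a, (faceEmbedding e a).monotone,
    (faceEmbedding e a).isIntervalPreserving ordConnected_range_faceEmbedding, he⟩
end

section
/- Let φ : [1]^{m} → [1]^{n} be a surjective, interval-preserving monotone function with n ≥ 1. Then there exist a coordinate permutation g of [1]^m, natural numbers m_1,...,m_n with m_1 + ... + m_n = m, and surjective monotone functions φ_i : [1]^{m_i} → [1] (i = 1,...,n) such that φ ∘ g = φ_1 × φ_2 × ... × φ_n (the product map acting on the corresponding blocks of coordinates). -/
open Set

def SurjOnIcc {α β : Type*} [Preorder α] [Preorder β] (h : α → β) : Prop :=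
  ∀ ⦃p q⦄, p ≤ q → SurjOn h (Icc p q) (Icc (h p) (h q))

section SurjOnIcc

variable {α β γ : Type*} [Preorder α] [Preorder β] [Preorder γ]

lemma SurjOnIcc.comp {h : β → γ} {k : α → β} (hh : SurjOnIcc h) (hk : SurjOnIcc k)
    (hk_mono : Monotone k) : SurjOnIcc (h ∘ k) :=
  fun _ _ hpq => (hh (hk_mono hpq)).comp (hk hpq)

lemma surjOnIcc_pair {ι : Type*} {i i' : ι} (hii' : i ≠ i') :
    SurjOnIcc fun y : ι → β => (y i, y i') := by
  classical
  rintro y₁ y₂ hy ⟨b, c⟩ ⟨hbc₁, hbc₂⟩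
  refine ⟨Function.update (Function.update y₂ i b) i' c, ⟨fun l => ?_, fun l => ?_⟩, ?_⟩
  · rcases eq_or_ne l i' with rfl | hl'
    · simpa using hbc₁.2
    rcases eq_or_ne l i with rfl | hl
    · simpa [hl'] using hbc₁.1
    simpa [hl, hl'] using hy l
  · rcases eq_or_ne l i' with rfl | hl'
    · simpa using hbc₂.2
    rcases eq_or_ne l i with rfl | hl
    · simpa [hl'] using hbc₂.1
    simp [hl, hl']
  · simp [hii']

end SurjOnIcc

lemma IsIntervalPreserving.surjOnIcc {α β : Type*} [Preorder α] [PartialOrder β] {f : α → β}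
    (hip : IsIntervalPreserving f) (hf : Monotone f) : SurjOnIcc f := by
  intro p q hpq
  obtain ⟨a, b, him⟩ := hip p q hpq
  have hp : f p ∈ Icc a b := him ▸ mem_image_of_mem f ⟨le_rfl, hpq⟩
  have hq : f q ∈ Icc a b := him ▸ mem_image_of_mem f ⟨hpq, le_rfl⟩
  obtain ⟨u, hu, hua⟩ : a ∈ f '' Icc p q := him ▸ ⟨le_rfl, hp.1.trans hp.2⟩
  obtain ⟨v, hv, hvb⟩ : b ∈ f '' Icc p q := him ▸ ⟨hp.1.trans hp.2, le_rfl⟩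
  have ha : a = f p := le_antisymm hp.1 (hua ▸ hf hu.1)
  have hb : b = f q := le_antisymm (hvb ▸ hf hv.2) hq.2
  rw [SurjOn, him, ha, hb]

section Pair

variable {α : Type*} {f g : α → Bool}

lemma SurjOnIcc.exists_mem_Icc [Preorder α] (hfg : SurjOnIcc fun x => (f x, g x)) {p q : α}
    (hpq : p ≤ q) {b c : Bool} (hb : f p ≤ b ∧ b ≤ f q) (hc : g p ≤ c ∧ c ≤ g q) :
    ∃ u ∈ Icc p q, f u = b ∧ g u = c := by
  obtain ⟨u, hu, huv⟩ := hfg hpq ⟨Prod.mk_le_mk.2 ⟨hb.1, hc.1⟩, Prod.mk_le_mk.2 ⟨hb.2, hc.2⟩⟩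
  exact ⟨u, hu, Prod.ext_iff.1 huv⟩

lemma SurjOnIcc.eq_of_minimal [PartialOrder α] (hfg : SurjOnIcc fun x => (f x, g x))
    (hf : Monotone f) {p W : α} (hW : Minimal (fun x => p ≤ x ∧ g x = true) W) : f W = f p := by
  obtain ⟨u, hu, hfu, hgu⟩ := hfg.exists_mem_Icc hW.prop.1 ⟨le_rfl, hf hW.prop.1⟩
    ⟨Bool.le_true _, hW.prop.2.ge⟩
  obtain rfl : u = W := hW.eq_of_le ⟨hu.1, hgu⟩ hu.2
  exact hfu

end Pair

section BooleanAlgebra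

variable {α : Type*} [BooleanAlgebra α] [Finite α] {f g : α → Bool}

theorem SurjOnIcc.not_atom_le_minimal_minimal (hfg : SurjOnIcc fun x => (f x, g x))
    (hf : Monotone f) (hg : Monotone g) {a : α} (ha : IsAtom a) (p : α) (hap : ¬ a ≤ p)
    {Z W : α} (hZ : Minimal (fun x => p ≤ x ∧ f x = true) Z)
    (hW : Minimal (fun x => p ≤ x ∧ g x = true) W) (haZ : a ≤ Z) (haW : a ≤ W) : False := by
  induction p using WellFoundedGT.induction generalizing Z W with
  | _ p ih =>
  have hfW : f W = false := by
    have hpZ : p < Z := lt_of_le_of_ne hZ.prop.1 (by rintro rfl; exact hap haZ)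
    rw [hfg.eq_of_minimal hf hW]
    simpa [hZ.prop.1] using hZ.not_prop_of_lt hpZ
  have hpW' : p ≤ W \ a := le_sdiff.2 ⟨hW.prop.1, (ha.not_le_iff_disjoint.1 hap).symm⟩
  have hgW' : g (W \ a) = false := by
    simpa [hpW'] using hW.not_prop_of_lt (sdiff_lt haW ha.ne_bot)
  obtain ⟨u, ⟨hW'u, huWZ⟩, hfu, hgu⟩ := hfg.exists_mem_Icc (sdiff_le.trans le_sup_left)
    ⟨Bool.le_true _, hZ.prop.2.ge.trans (hf le_sup_right)⟩ ⟨hgW'.le, Bool.false_le _⟩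
  have hau : ¬ a ≤ u := fun h => by
    have : W ≤ u := (sdiff_sup_cancel haW).ge.trans (sup_le hW'u h)
    simpa [hW.prop.2, hgu, Bool.le_iff_imp] using hg this
  set t := u ⊓ Z
  have hpt : p < t := by
    refine lt_of_le_not_ge (le_inf (hpW'.trans hW'u) hZ.prop.1) fun htp => ?_
    have huW : u ≤ W := calc
      u = u ⊓ W ⊔ t := by rw [← inf_sup_left, inf_eq_left.2 huWZ]
      _ ≤ W := sup_le inf_le_right (htp.trans hW.prop.1)
    simpa [hfu, hfW, Bool.le_iff_imp] using hf huW
  obtain ⟨W₁, hW₁, hW₁min⟩ := exists_minimal_le_of_wellFoundedLT (fun x => t ≤ x ∧ g x = true)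
    (W ⊔ t) ⟨le_sup_right, hW.prop.2.ge.trans (hg le_sup_left) |> Bool.eq_true_of_true_le⟩
  by_cases haW₁ : a ≤ W₁
  · exact ih t hpt (fun hat => hau (hat.trans inf_le_left))
      (hZ.mono (fun x hx => ⟨hpt.le.trans hx.1, hx.2⟩) ⟨inf_le_right, hZ.prop.2⟩) hW₁min haZ haW₁
  · have hW₁u : W₁ ≤ u := by
      have : W₁ ≤ (W \ a ⊔ t) ⊔ a := by
        rwa [sup_right_comm, sdiff_sup_cancel haW]
      exact (Disjoint.left_le_of_le_sup_right this ((ha.not_le_iff_disjoint.1 haW₁).symm)).trans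
        (sup_le hW'u inf_le_left)
    simpa [hW₁min.prop.2, hgu, Bool.le_iff_imp] using hg hW₁u

theorem SurjOnIcc.disjoint_of_minimal (hfg : SurjOnIcc fun x => (f x, g x)) (hf : Monotone f)
    (hg : Monotone g) {Z W : α} (hZ : Minimal (fun x => f x = true) Z)
    (hW : Minimal (fun x => g x = true) W) : Disjoint Z W := by
  rw [disjoint_iff]
  obtain h | ⟨a, ha, haZW⟩ := eq_bot_or_exists_atom_le (Z ⊓ W)
  · exact h
  exact (hfg.not_atom_le_minimal_minimal hf hg ha ⊥ (not_le_of_gt ha.bot_lt)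
    (by simpa using hZ) (by simpa using hW) (haZW.trans inf_le_left) (haZW.trans inf_le_right)).elim

end BooleanAlgebra

section Cube

variable {ι : Type*}

def mintermSupport (f : (ι → Bool) → Bool) : Set ι :=
  {j | ∃ Z, Minimal (fun x => f x = true) Z ∧ Z j = true}

lemma dependsOn_mintermSupport [Finite ι] {f : (ι → Bool) → Bool} (hf : Monotone f) :
    DependsOn f (mintermSupport f) := by
  have key : ∀ ⦃x y⦄, (∀ j ∈ mintermSupport f, x j = y j) → f x = true → f y = true := by
    intro x y hxy hx
    obtain ⟨Z, hZx, hZ⟩ := exists_minimal_le_of_wellFoundedLT (fun x => f x = true) x hx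
    refine Bool.eq_true_of_true_le (hZ.prop.ge.trans (hf fun j => ?_))
    cases hZj : Z j
    · exact Bool.false_le _
    · exact (hxy j ⟨Z, hZ, hZj⟩ ▸ hZj ▸ hZx j)
  intro x y hxy
  exact Bool.eq_iff_iff.2 ⟨key hxy, key fun j hj => (hxy j hj).symm⟩

lemma mintermSupport_disjoint [Finite ι] {κ : Type*} {φ : (ι → Bool) → κ → Bool}
    (hφ : Monotone φ) (hφI : SurjOnIcc φ) {i i' : κ} (hii' : i ≠ i') :
    Disjoint (mintermSupport (φ · i)) (mintermSupport (φ · i')) := by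
  rw [Set.disjoint_left]
  rintro j ⟨Z, hZ, hZj⟩ ⟨W, hW, hWj⟩
  have hfg : SurjOnIcc fun x => (φ x i, φ x i') := (surjOnIcc_pair hii').comp hφI hφ
  have hZW := hfg.disjoint_of_minimal (fun _ _ h => hφ h i) (fun _ _ h => hφ h i') hZ hW
  simpa [hZj, hWj] using Pi.disjoint_iff.1 hZW j

end Cube

lemma Function.monotone_extend {α β γ : Type*} [Preorder γ] (f : α → β) (e' : β → γ) :
    Monotone fun g : α → γ => Function.extend f g e' := by
  classical
  intro g g' h b
  simp only [Function.extend_def]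
  split_ifs
  exacts [h _, le_rfl]

section Blocks

variable {ι κ : Type*} [Fintype ι] [DecidableEq κ] (idx : ι → κ)

noncomputable def blockEquiv : (Σ k, Fin (Fintype.card {l // idx l = k})) ≃ ι :=
  (Equiv.sigmaCongrRight fun k => (Fintype.equivFin {l // idx l = k}).symm).trans
    (Equiv.sigmaFiberEquiv idx)

lemma apply_blockEquiv (k : κ) (c : Fin (Fintype.card {l // idx l = k})) :
    idx (blockEquiv idx ⟨k, c⟩) = k :=
  ((Fintype.equivFin _).symm c).2

lemma sum_card_fiber [Fintype κ] : ∑ k, Fintype.card {l // idx l = k} = Fintype.card ι := by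
  rw [← Fintype.card_sigma, Fintype.card_congr (Equiv.sigmaFiberEquiv idx)]

end Blocks

theorem exists_blockwise_factorization {m n : ℕ} {φ : (Fin m → Bool) → (Fin n → Bool)}
    (hm : Monotone φ) (hs : Function.Surjective φ) (idx : Fin m → Fin n)
    (hdep : ∀ i, DependsOn (φ · i) {j | idx j = i}) :
    ∃ (sz : Fin n → ℕ) (_ : ∑ i, sz i = m) (e : (Σ i : Fin n, Fin (sz i)) ≃ Fin m)
      (ψ : ∀ i : Fin n, (Fin (sz i) → Bool) → Bool),
      (∀ i, Monotone (ψ i) ∧ Function.Surjective (ψ i)) ∧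
      ∀ (x : Fin m → Bool) (i : Fin n), φ x i = ψ i (fun j => x (e ⟨i, j⟩)) := by
  set e := blockEquiv idx
  have he : ∀ i, Function.Injective fun c => e ⟨i, c⟩ :=
    fun _ => e.injective.comp sigma_mk_injective
  set ψ := fun i y => φ (Function.extend (fun c => e ⟨i, c⟩) y ⊥) i
  have hφψ : ∀ x i, φ x i = ψ i (fun c => x (e ⟨i, c⟩)) := by
    refine fun x i => hdep i fun j hj => ?_
    obtain ⟨⟨k, c⟩, rfl⟩ := e.surjective j
    obtain rfl : k = i := (apply_blockEquiv idx k c).symm.trans hj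
    exact ((he k).extend_apply (fun c => x (e ⟨k, c⟩)) ⊥ c).symm
  refine ⟨_, by rw [sum_card_fiber, Fintype.card_fin], e, ψ, fun i => ⟨?_, fun b => ?_⟩, hφψ⟩
  · exact fun y y' h => hm (Function.monotone_extend _ _ h) i
  · obtain ⟨x, hx⟩ := hs fun _ => b
    exact ⟨_, (hφψ x i).symm.trans (congrFun hx i)⟩

/-- A surjective interval-preserving monotone `φ : [1]^m → [1]^n` (with
`n ≥ 1`) decomposes, up to a coordinate permutation of the domain, as a product of
surjective monotone maps `φᵢ : [1]^{mᵢ} → [1]` with `m₁ + ⋯ + m_n = m`.  Here the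
coordinate permutation and contiguous blocks are packaged as a bijection
`e : (Σ i, Fin (sz i)) ≃ Fin m` assigning the coordinates of each block. -/
theorem stmt_8 {m n : ℕ} (hn : 1 ≤ n) (φ : (Fin m → Bool) → (Fin n → Bool))
    (hm : Monotone φ) (hs : Function.Surjective φ) (hip : IsIntervalPreserving φ) :
    ∃ (sz : Fin n → ℕ) (_ : ∑ i, sz i = m) (e : (Σ i : Fin n, Fin (sz i)) ≃ Fin m)
      (ψ : ∀ i : Fin n, (Fin (sz i) → Bool) → Bool),
      (∀ i, Monotone (ψ i) ∧ Function.Surjective (ψ i)) ∧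
      ∀ (x : Fin m → Bool) (i : Fin n), φ x i = ψ i (fun j => x (e ⟨i, j⟩)) := by
  classical
  set S := fun i => mintermSupport (φ · i)
  have hS : ∀ {i i' j}, j ∈ S i → j ∈ S i' → i = i' := fun {i i' j} hi hi' => by
    by_contra hii'
    exact Set.disjoint_left.1 (mintermSupport_disjoint hm (hip.surjOnIcc hm) hii') hi hi'
  let idx : Fin m → Fin n := fun j => if h : ∃ i, j ∈ S i then h.choose else ⟨0, hn⟩
  have hidx : ∀ {i j}, j ∈ S i → idx j = i := fun {i j} hj => by
    have h : ∃ i, j ∈ S i := ⟨i, hj⟩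
    simp only [idx, dif_pos h]
    exact hS h.choose_spec hj
  exact exists_blockwise_factorization hm hs idx fun i =>
    (dependsOn_mintermSupport fun _ _ h => hm h i).mono fun _ => hidx
end

section
/- A function φ : [1]^m → [1]^n is an interval-preserving meet-semilattice homomorphism if and only if, up to the factorization through its image, each component of the surjective part is a meet of a nonempty subset of coordinates. Concretely for n = 1: a surjective function φ : [1]^m → [1] preserving binary meets and intervals is of the form φ(x) = ⋀_{i ∈ I} x_i for some nonempty subset I ⊆ {1,...,m}. -/
open Finset

theorem exists_eq_true_iff_le_of_map_inf {α : Type*} [SemilatticeInf α] [Fintype α]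
    {φ : α → Bool} (hmeet : ∀ x y, φ (x ⊓ y) = φ x ⊓ φ y) (htrue : ∃ x, φ x = true) :
    ∃ a, ∀ x, φ x = true ↔ a ≤ x := by
  classical
  set S := univ.filter (φ · = true)
  have hS : S.Nonempty := by simpa [S, Finset.Nonempty] using htrue
  refine ⟨S.inf' hS id, fun x => ⟨fun hx => inf'_le id (by simpa [S] using hx), fun hax => ?_⟩⟩
  have ha : φ (S.inf' hS id) = true := by
    rw [apply_inf'_eq_inf'_comp hS φ hmeet]
    exact inf'_eq_of_forall hS _ fun y hy => by simpa [S] using hy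
  exact Bool.le_iff_imp.1 (Monotone.of_map_inf hmeet hax) ha

theorem Pi.bool_le_iff_inf_support_eq_true {ι : Type*} [Fintype ι] (a x : ι → Bool) :
    a ≤ x ↔ (univ.filter (a · = true)).inf x = true := by
  rw [← top_eq_true, Finset.inf_eq_top_iff]
  simp [Pi.le_def, Bool.le_iff_imp]

theorem stmt_12_general {m : ℕ} (φ : (Fin m → Bool) → Bool) (hs : Function.Surjective φ)
    (hmeet : ∀ x y, φ (x ⊓ y) = φ x ⊓ φ y) :
    ∃ I : Finset (Fin m), I.Nonempty ∧ ∀ x, φ x = I.inf x := by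
  obtain ⟨a, ha⟩ := exists_eq_true_iff_le_of_map_inf hmeet (hs true)
  have hφ : ∀ x, φ x = (univ.filter (a · = true)).inf x := fun x =>
    Bool.eq_iff_iff.2 ((ha x).trans (Pi.bool_le_iff_inf_support_eq_true a x))
  refine ⟨_, nonempty_iff_ne_empty.2 fun hI => ?_, hφ⟩
  obtain ⟨x, hx⟩ := hs false
  simp [hφ, hI] at hx

/-- A surjective function `φ : [1]^m → [1]` preserving binary meets and
intervals is of the form `φ x = ⋀_{i ∈ I} x i` for some nonempty `I ⊆ {1,…,m}`. -/
theorem stmt_12 {m : ℕ} (φ : (Fin m → Bool) → Bool) (hs : Function.Surjective φ)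
    (hmeet : ∀ x y, φ (x ⊓ y) = φ x ⊓ φ y) (hip : IsIntervalPreserving φ) :
    ∃ I : Finset (Fin m), I.Nonempty ∧ ∀ x, φ x = I.inf x :=
  stmt_12_general φ hs hmeet
end

section
/- A surjective function φ : [1]^m → [1] that preserves binary joins and is interval-preserving is of the form φ(x) = ⋁_{i ∈ I} x_i for some nonempty subset I ⊆ {1,...,m}. -/
/-! Writing `x = ⋁_{x i} eᵢ` with the unit vectors `eᵢ`, a map preserving finite joins satisfies
`φ x = ⋁_{x i} φ eᵢ`, which is `⋁_{i ∈ I} x i` for `I = {i | φ eᵢ}`. Surjectivity forces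
`φ ⊥ = ⊥` (by monotonicity) and `I ≠ ∅` (otherwise `φ` is constantly `⊥`). -/

open Finset

theorem Monotone.map_bot_of_surjective {α β : Type*} [Preorder α] [OrderBot α] [PartialOrder β]
    [OrderBot β] {f : α → β} (hf : Monotone f) (hs : Function.Surjective f) : f ⊥ = ⊥ := by
  obtain ⟨a, ha⟩ := hs ⊥
  exact le_bot_iff.mp (ha ▸ hf bot_le)

namespace Bool

variable {ι : Type*} [Fintype ι]

theorem finset_sup_filter_comm (x y : ι → Bool) :
    ({i | x i} : Finset ι).sup y = ({i | y i} : Finset ι).sup x := by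
  rw [← Bool.coe_iff_coe, ← top_eq_true, Finset.sup_eq_top_iff, Finset.sup_eq_top_iff]
  simp [_root_.and_comm]

theorem finset_sup_filter_decide_eq_self [DecidableEq ι] (x : ι → Bool) :
    ({i | x i} : Finset ι).sup (fun i j => decide (j = i)) = x := by
  funext j
  rw [Finset.sup_apply, ← Bool.coe_iff_coe, ← top_eq_true, Finset.sup_eq_top_iff]
  simp

end Bool

theorem SupBotHom.apply_eq_finset_sup {ι : Type*} [Fintype ι] [DecidableEq ι]
    (φ : SupBotHom (ι → Bool) Bool) (x : ι → Bool) :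
    φ x = ({i | φ fun j => decide (j = i)} : Finset ι).sup x := by
  conv_lhs => rw [← Bool.finset_sup_filter_decide_eq_self x]
  rw [map_finset_sup]
  exact Bool.finset_sup_filter_comm _ _

theorem stmt_13_general {m : ℕ} (φ : (Fin m → Bool) → Bool) (hs : Function.Surjective φ)
    (hjoin : ∀ x y, φ (x ⊔ y) = φ x ⊔ φ y) :
    ∃ I : Finset (Fin m), I.Nonempty ∧ ∀ x, φ x = I.sup x := by
  let ψ : SupHom (Fin m → Bool) Bool := ⟨φ, hjoin⟩
  let χ : SupBotHom (Fin m → Bool) Bool := ⟨ψ, (OrderHomClass.mono ψ).map_bot_of_surjective hs⟩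
  refine ⟨_, nonempty_iff_ne_empty.2 fun hI => ?_, χ.apply_eq_finset_sup⟩
  obtain ⟨a, ha⟩ := hs true
  have := χ.apply_eq_finset_sup a
  rw [hI, sup_empty] at this
  exact Bool.true_eq_false_eq_False (ha ▸ this)

/-- A surjective function `φ : [1]^m → [1]` preserving binary joins and
intervals is of the form `φ x = ⋁_{i ∈ I} x i` for some nonempty `I ⊆ {1,…,m}`. -/
theorem stmt_13 {m : ℕ} (φ : (Fin m → Bool) → Bool) (hs : Function.Surjective φ)
    (hjoin : ∀ x y, φ (x ⊔ y) = φ x ⊔ φ y) (hip : IsIntervalPreserving φ) :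
    ∃ I : Finset (Fin m), I.Nonempty ∧ ∀ x, φ x = I.sup x :=
  stmt_13_general φ hs hjoin
end

section
/- Let δ : [k₁] → [k₂] be an injective monotone function between finite linear orders, and let L be a finite Boolean lattice [1]^n. Then the induced precomposition map L^δ : L^{[k₂]} → L^{[k₁]} between the posets of monotone functions (with pointwise order) is a lattice homomorphism that maps Boolean intervals onto Boolean intervals. -/
/-! Precomposition with `δ` is computed pointwise, so it is a lattice homomorphism. As `δ` is an
order embedding, every monotone `h` with `a ∘ δ ≤ h ≤ b ∘ δ` extends to some `f ∈ [a, b]`, namely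
`a` joined with the left Kan extension of `h` along `δ`; so `[a, b]` is mapped onto
`[a ∘ δ, b ∘ δ]`. A lattice homomorphism `ψ` out of a finite Boolean algebra satisfies
`ψ x ≤ ψ y ↔ x ≤ y ⊔ c` for the largest `c` with `ψ c = ψ ⊥` (the kernel of `ψ` is closed under
`⊔`). On `Bool^k` this says that `ψ` only sees the coordinates where `c` vanishes, so its image is
again a cube `Bool^k'`. -/

/-- A subset of a poset is a Boolean interval if it is an interval order-isomorphic to
some finite Boolean lattice \`[1]^k\`. -/
def IsBooleanInterval {P : Type*} [Preorder P] (S : Set P) : Prop :=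
  ∃ a b : P, a ≤ b ∧ S = Set.Icc a b ∧ ∃ k : ℕ, Nonempty (Set.Icc a b ≃o (Fin k → Bool))

open Finset

def OrderHom.precompLatticeHom {α β L : Type*} [Preorder α] [Preorder β] [Lattice L]
    (δ : α →o β) : LatticeHom (β →o L) (α →o L) where
  toFun f := f.comp δ
  map_sup' _ _ := rfl
  map_inf' _ _ := rfl

def Set.Icc.coeLatticeHom {α : Type*} [Lattice α] (a b : α) : LatticeHom (Set.Icc a b) α where
  toFun := Subtype.val
  map_sup' _ _ := rfl
  map_inf' _ _ := rfl

theorem OrderHom.comp_image_Icc {α β L : Type*} [Preorder α] [Fintype α] [Preorder β]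
    [SemilatticeSup L] [OrderBot L] (δ : α →o β) (hδ : ∀ i j, δ i ≤ δ j → i ≤ j)
    {a b : β →o L} (hab : a ≤ b) :
    (fun f => f.comp δ) '' Set.Icc a b = Set.Icc (a.comp δ) (b.comp δ) := by
  classical
  refine Set.Subset.antisymm ?_ fun h ⟨ha, hb⟩ => ?_
  · rintro _ ⟨f, ⟨haf, hfb⟩, rfl⟩
    exact ⟨fun i => haf (δ i), fun i => hfb (δ i)⟩
  let f : β →o L :=
    ⟨fun j => a j ⊔ (univ.filter (δ · ≤ j)).sup h, fun j j' hjj' =>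
      sup_le_sup (a.mono hjj') (Finset.sup_mono fun i hi => by
        simp only [mem_filter, mem_univ, true_and] at hi ⊢
        exact hi.trans hjj')⟩
  have hkan : ∀ i, (univ.filter (δ · ≤ δ i)).sup h = h i := fun i =>
    le_antisymm (Finset.sup_le fun i' hi' => h.mono (hδ _ _ (mem_filter.1 hi').2))
      (Finset.le_sup (by simp))
  refine ⟨f, ⟨fun j => le_sup_left, fun j => sup_le (hab j) (Finset.sup_le fun i hi => ?_)⟩, ?_⟩
  · exact (hb i).trans (b.mono (mem_filter.1 hi).2)
  · refine OrderHom.ext _ _ (funext fun i => ?_)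
    exact (congrArg (a (δ i) ⊔ ·) (hkan i)).trans (sup_eq_right.2 (ha i))

theorem LatticeHom.exists_map_le_map_iff_le_sup {B M : Type*} [BooleanAlgebra B] [Finite B]
    [Lattice M] (ψ : LatticeHom B M) : ∃ c, ∀ x y, ψ x ≤ ψ y ↔ x ≤ y ⊔ c := by
  classical
  have := Fintype.ofFinite B
  set c := (univ.filter fun x => ψ x = ψ ⊥).sup id
  have hc : ψ c = ψ ⊥ :=
    Finset.sup_induction (p := fun x => ψ x = ψ ⊥) rfl
      (fun x hx y hy => by rw [map_sup, hx, hy, sup_idem]) fun x hx => (mem_filter.1 hx).2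
  have hle_c : ∀ z, ψ z = ψ ⊥ → z ≤ c := fun z hz => Finset.le_sup (f := id) (by simp [hz])
  refine ⟨c, fun x y => ⟨fun hxy => ?_, fun hxy => ?_⟩⟩
  · have hker : ψ (x ⊓ yᶜ) = ψ ⊥ := le_antisymm
      (calc ψ (x ⊓ yᶜ) = ψ x ⊓ ψ yᶜ := map_inf ψ x yᶜ
        _ ≤ ψ y ⊓ ψ yᶜ := inf_le_inf_right _ hxy
        _ = ψ ⊥ := by rw [← map_inf, inf_compl_self])
      (OrderHomClass.mono ψ bot_le)
    rw [← sdiff_le_iff, sdiff_eq]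
    exact hle_c _ hker
  · calc ψ x ≤ ψ (y ⊔ c) := OrderHomClass.mono ψ hxy
      _ = ψ y := by rw [map_sup, hc, sup_eq_left.2 (OrderHomClass.mono ψ bot_le)]

theorem nonempty_orderIso_range_of_map_le_map_iff {α β M : Type*} [PartialOrder β]
    [PartialOrder M] (ψ : α → M) {r : α → β} (hr : Function.Surjective r)
    (h : ∀ x y, ψ x ≤ ψ y ↔ r x ≤ r y) : Nonempty (Set.range ψ ≃o β) := by
  let s := Function.surjInv hr
  have hs : ∀ b, r (s b) = b := Function.surjInv_eq hr
  let e : β ↪o Set.range ψ :=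
    OrderEmbedding.ofMapLEIff (fun b => ⟨ψ (s b), Set.mem_range_self _⟩) fun b b' => by
      simp only [Subtype.mk_le_mk, h, hs]
  refine ⟨(OrderIso.ofSurjective e ?_).symm⟩
  rintro ⟨_, x, rfl⟩
  refine ⟨r x, Subtype.ext (le_antisymm ?_ ?_)⟩
  · exact (h _ _).2 (hs (r x)).le
  · exact (h _ _).2 (hs (r x)).ge

theorem LatticeHom.exists_orderIso_range_of_pi_bool {ι M : Type*} [Fintype ι] [Lattice M]
    (ψ : LatticeHom (ι → Bool) M) : ∃ k, Nonempty (Set.range ψ ≃o (Fin k → Bool)) := by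
  classical
  obtain ⟨c, hc⟩ := ψ.exists_map_le_map_iff_le_sup
  let e := Fintype.equivFin {i // c i = false}
  let g : Fin (Fintype.card {i // c i = false}) → ι := fun j => e.symm j
  have hg : Function.Injective g := Subtype.val_injective.comp e.symm.injective
  refine ⟨_, nonempty_orderIso_range_of_map_le_map_iff ψ
    hg.surjective_comp_right fun x y => (hc x y).trans ⟨fun hxy j => ?_, fun hxy i => ?_⟩⟩
  · simpa [g, (e.symm j).2] using hxy (g j)
  · cases hci : c i
    · simpa [hci, g] using hxy (e ⟨i, hci⟩)
    · simp [hci]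

/-- For an injective monotone `δ : [k₁] → [k₂]` and `L = [1]^n`, the
precomposition map `L^δ : L^{[k₂]} → L^{[k₁]}` between posets of monotone functions is a
lattice homomorphism mapping Boolean intervals onto Boolean intervals. -/
theorem stmt_16 {k₁ k₂ n : ℕ} (δ : Fin (k₁ + 1) →o Fin (k₂ + 1))
    (hδ : Function.Injective δ) :
    (∀ f g : Fin (k₂ + 1) →o (Fin n → Bool),
        (f ⊔ g).comp δ = f.comp δ ⊔ g.comp δ ∧ (f ⊓ g).comp δ = f.comp δ ⊓ g.comp δ) ∧
    ∀ S : Set (Fin (k₂ + 1) →o (Fin n → Bool)), IsBooleanInterval S →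
      IsBooleanInterval ((fun f => f.comp δ) '' S) := by
  refine ⟨fun f g => ⟨map_sup δ.precompLatticeHom f g, map_inf δ.precompLatticeHom f g⟩, ?_⟩
  rintro _ ⟨a, b, hab, rfl, k, ⟨e⟩⟩
  have himage :=
    δ.comp_image_Icc (fun i j => (δ.monotone.strictMono_of_injective hδ).le_iff_le.1) hab
  let ψ : LatticeHom (Fin k → Bool) (Fin (k₁ + 1) →o (Fin n → Bool)) :=
    δ.precompLatticeHom.comp
      ((Set.Icc.coeLatticeHom a b).comp (e.symm : LatticeHom (Fin k → Bool) (Set.Icc a b)))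
  have hrange : Set.range ψ = (fun f => f.comp δ) '' Set.Icc a b := by
    simp only [ψ, LatticeHom.coe_comp, Set.range_comp, LatticeHom.coe_mk, SupHom.coe_mk,
      e.symm.surjective.range_eq, Set.image_univ]
    exact congrArg _ Subtype.range_coe
  obtain ⟨k', ⟨e'⟩⟩ := ψ.exists_orderIso_range_of_pi_bool
  refine ⟨_, _, fun i => hab (δ i), himage, k', ⟨?_⟩⟩
  rwa [← himage, ← hrange]
end

section
/- Let φ : [1]^m → [1]^n be an interval-preserving monotone function and k ≥ 0. Then the induced postcomposition map φ^{[k]} : ([1]^m)^{[k]} → ([1]^n)^{[k]} on posets of monotone functions from the chain [k] maps Boolean intervals onto Boolean intervals. -/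
open Set

theorem image_Icc_eq_Icc_of_isIntervalPreserving {α β : Type*} [Preorder α] [PartialOrder β]
    {φ : α → β} (hφ : Monotone φ) (hip : IsIntervalPreserving φ) {p q : α} (hpq : p ≤ q) :
    φ '' Icc p q = Icc (φ p) (φ q) := by
  obtain ⟨a, b, hab⟩ := hip p q hpq
  have hp : φ p ∈ Icc a b := hab ▸ mem_image_of_mem φ (left_mem_Icc.2 hpq)
  have hq : φ q ∈ Icc a b := hab ▸ mem_image_of_mem φ (right_mem_Icc.2 hpq)
  obtain ⟨x, hx, hxa⟩ : a ∈ φ '' Icc p q := hab ▸ left_mem_Icc.2 (hp.1.trans hp.2)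
  obtain ⟨y, hy, hyb⟩ : b ∈ φ '' Icc p q := hab ▸ right_mem_Icc.2 (hq.1.trans hq.2)
  rw [hab, le_antisymm hp.1 (hxa ▸ hφ hx.1), le_antisymm (hyb ▸ hφ hy.2) hq.2]

theorem Set.Icc.exists_inf_eq_and_sup_eq {α γ : Type*} [Lattice α] [Lattice γ] [BoundedOrder γ]
    [ComplementedLattice γ] {a b : α} (hab : a ≤ b) (e : Icc a b ≃o γ) {x : α}
    (hx : x ∈ Icc a b) : ∃ y ∈ Icc a b, x ⊓ y = a ∧ x ⊔ y = b := by
  have : Fact (a ≤ b) := ⟨hab⟩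
  have := e.symm.complementedLattice
  obtain ⟨y, hy⟩ := exists_isCompl (⟨x, hx⟩ : Icc a b)
  exact ⟨y, y.2, Set.Icc.isCompl_iff.1 hy⟩

theorem eq_left_of_mem_Icc_of_not_lt {α : Type*} [PartialOrder α] {a b c : α}
    (hc : c ∈ Icc a b) (h : ¬a < b) : c = a :=
  le_antisymm (hc.2.trans ((hc.1.trans hc.2).eq_of_not_lt h).ge) hc.1

def orderIsoIccBoolFun {ι : Type*} {x y : ι → Bool} (hxy : x ≤ y) :
    Icc x y ≃o ({i // x i < y i} → Bool) where
  toFun z i := z.1 i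
  invFun χ := ⟨fun i => if h : x i < y i then χ ⟨i, h⟩ else x i, fun i => by
      dsimp only
      split_ifs with h
      · simp [(Bool.lt_iff.1 h).1]
      · exact le_rfl,
    fun i => by
      dsimp only
      split_ifs with h
      · simp [(Bool.lt_iff.1 h).2]
      · exact hxy i⟩
  left_inv z := by
    ext i
    by_cases h : x i < y i
    · simp [h]
    · simp [h, eq_left_of_mem_Icc_of_not_lt ⟨z.2.1 i, z.2.2 i⟩ h]
  right_inv χ := by
    funext d
    simp [d.2]
  map_rel_iff' {z w} := by
    refine ⟨fun hzw i => ?_, fun hzw d => hzw d.1⟩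
    by_cases h : x i < y i
    · exact hzw ⟨i, h⟩
    · rw [eq_left_of_mem_Icc_of_not_lt ⟨z.2.1 i, z.2.2 i⟩ h,
        eq_left_of_mem_Icc_of_not_lt ⟨w.2.1 i, w.2.2 i⟩ h]

theorem exists_orderIso_Icc_fin_bool {ι : Type*} [Finite ι] {x y : ι → Bool} (hxy : x ≤ y) :
    ∃ r : ℕ, Nonempty (Icc x y ≃o (Fin r → Bool)) := by
  obtain ⟨r, ⟨e⟩⟩ := Finite.exists_equiv_fin {i // x i < y i}
  refine ⟨r, ⟨(orderIsoIccBoolFun hxy).trans ?_⟩⟩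
  exact (e.arrowCongr (Equiv.refl Bool)).toOrderIso (fun _ _ h _ => h _) (fun _ _ h _ => h _)

namespace OrderHom

variable {α β : Type*}

def Interlaced [Preorder α] [Preorder β] (f g : α →o β) : Prop :=
  ∀ ⦃a b : α⦄, a < b → g a ≤ f b

theorem Interlaced.of_Icc_orderIso {γ : Type*} [Preorder α] [DistribLattice β]
    [Lattice γ] [BoundedOrder γ] [ComplementedLattice γ] {f g : α →o β} (hfg : f ≤ g)
    (e : Icc f g ≃o γ) : Interlaced f g := by
  classical
  intro l l' hll'
  have hmono : Monotone fun a => if l' ≤ a then f a ⊔ g l else f a := by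
    intro a b hab
    by_cases ha : l' ≤ a
    · simp only [ha, ha.trans hab, if_true]
      exact sup_le_sup_right (f.mono hab) _
    · simp only [ha, if_false]
      split_ifs
      exacts [le_sup_of_le_left (f.mono hab), f.mono hab]
  let x : α →o β := ⟨_, hmono⟩
  have hx : x ∈ Icc f g := by
    refine ⟨fun a => ?_, fun a => ?_⟩ <;> simp only [x, OrderHom.coe_mk] <;> split_ifs with ha
    · exact le_sup_left
    · exact le_rfl
    · exact sup_le (hfg a) (g.mono (hll'.le.trans ha))
    · exact hfg a
  obtain ⟨y, -, hinf, hsup⟩ := Set.Icc.exists_inf_eq_and_sup_eq hfg e hx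
  have hl : g l = f l ⊔ y l := by
    simpa [x, not_le_of_gt hll'] using (DFunLike.congr_fun hsup l).symm
  have hl' : f l' = (f l' ⊔ g l) ⊓ y l' := by
    simpa [x] using (DFunLike.congr_fun hinf l').symm
  -- `g l ⊓ y l' ≤ f l'` and `g l ≤ f l' ⊔ y l'` force `g l ≤ f l'` by distributivity.
  refine le_of_inf_le_sup_le (z := y l') ?_ ?_
  · exact le_inf (hl' ▸ inf_le_inf_right _ le_sup_right) inf_le_right
  · refine sup_le ?_ le_sup_right
    rw [hl]
    exact sup_le_sup (f.mono hll'.le) (y.mono hll'.le)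

namespace Interlaced

variable [PartialOrder α] [Preorder β] {f g : α →o β}

theorem monotone_of_forall_mem_Icc (h : Interlaced f g) {x : α → β}
    (hx : ∀ a, x a ∈ Icc (f a) (g a)) : Monotone x := by
  intro a b hab
  obtain rfl | hlt := hab.eq_or_lt
  · exact le_rfl
  · exact (hx a).2.trans ((h hlt).trans (hx b).1)

theorem comp {γ : Type*} [Preorder γ] (h : Interlaced f g) (φ : β →o γ) :
    Interlaced (φ.comp f) (φ.comp g) :=
  fun _ _ hab => φ.mono (h hab)

def orderIsoIcc (h : Interlaced f g) : Icc f g ≃o Icc (⇑f) (⇑g) where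
  toFun x := ⟨x.1, x.2.1, x.2.2⟩
  invFun x := ⟨⟨x.1, h.monotone_of_forall_mem_Icc fun a => ⟨x.2.1 a, x.2.2 a⟩⟩, x.2.1, x.2.2⟩
  left_inv _ := rfl
  right_inv _ := rfl
  map_rel_iff' := Iff.rfl

theorem image_comp_Icc {γ : Type*} [PartialOrder γ] {φ : β →o γ} (hφ : IsIntervalPreserving φ)
    (hfg : f ≤ g) (h : Interlaced f g) :
    (φ.comp ·) '' Icc f g = Icc (φ.comp f) (φ.comp g) := by
  ext u
  constructor
  · rintro ⟨x, hx, rfl⟩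
    exact ⟨fun a => φ.mono (hx.1 a), fun a => φ.mono (hx.2 a)⟩
  · intro hu
    have hu' : ∀ a, u a ∈ φ '' Icc (f a) (g a) := fun a => by
      rw [image_Icc_eq_Icc_of_isIntervalPreserving φ.mono hφ (hfg a)]
      exact ⟨hu.1 a, hu.2 a⟩
    choose x hx hφx using hu'
    exact ⟨⟨x, h.monotone_of_forall_mem_Icc hx⟩, ⟨fun a => (hx a).1, fun a => (hx a).2⟩,
      OrderHom.ext _ _ (funext hφx)⟩

theorem isBooleanInterval_Icc {ι : Type*} [Finite α] [Finite ι] {f g : α →o (ι → Bool)}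
    (hfg : f ≤ g) (h : Interlaced f g) : IsBooleanInterval (Icc f g) := by
  let curryIso : (α → ι → Bool) ≃o (α × ι → Bool) :=
    (Equiv.curry α ι Bool).symm.toOrderIso (fun _ _ h p => h p.1 p.2) (fun _ _ h a i => h (a, i))
  obtain ⟨r, ⟨e⟩⟩ := exists_orderIso_Icc_fin_bool (curryIso.monotone hfg)
  exact ⟨f, g, hfg, rfl, r, ⟨h.orderIsoIcc.trans ((curryIso.Icc f g).trans e)⟩⟩

end Interlaced

end OrderHom

/-- For an interval-preserving monotone `φ : [1]^m → [1]^n`, the induced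
postcomposition map `φ^{[k]}` on posets of monotone functions from the chain `[k]` maps
Boolean intervals onto Boolean intervals. -/
theorem stmt_17 {m n k : ℕ} (φ : (Fin m → Bool) → (Fin n → Bool)) (hm : Monotone φ)
    (hip : IsIntervalPreserving φ) :
    ∀ S : Set (Fin (k + 1) →o (Fin m → Bool)), IsBooleanInterval S →
      IsBooleanInterval
        ((fun f => (⟨φ, hm⟩ : (Fin m → Bool) →o (Fin n → Bool)).comp f) '' S) := by
  rintro S ⟨f, g, hfg, rfl, r, ⟨e⟩⟩
  have h := OrderHom.Interlaced.of_Icc_orderIso hfg e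
  rw [h.image_comp_Icc (φ := ⟨φ, hm⟩) hip hfg]
  exact (h.comp _).isBooleanInterval_Icc (OrderHom.comp_mono le_rfl hfg)
end

section
/- Let φ : [1]^{m+2} → [1]² be a surjective interval-preserving monotone function. Then, after composing with a coordinate permutation of the domain, φ decomposes as a product φ₁ × φ₂ of two surjective monotone functions φ_i : [1]^{m_i} → [1] with m₁ + m₂ = m + 2. In particular, for distinct output coordinates i ≠ j of any surjective interval-preserving monotone φ : [1]^m → [1]^n, the sets of input coordinates on which the i-th and j-th components of φ depend are disjoint. -/
/-- The `i`-th component of `φ` depends on input coordinate `s`. -/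
def BoolDependsOn {m n : ℕ} (φ : (Fin m → Bool) → (Fin n → Bool)) (i : Fin n) (s : Fin m) :
    Prop :=
  ∃ x y : Fin m → Bool, (∀ t, t ≠ s → x t = y t) ∧ φ x i ≠ φ y i

open Function

section IntervalPreserving

variable {α : Type*} [Preorder α]

theorem IsIntervalPreserving.exists_mem_Icc_eq {β : Type*} [Preorder β] {f : α → β}
    (hf : IsIntervalPreserving f) {p q : α} (hpq : p ≤ q) {z : β} (hpz : f p ≤ z) (hzq : z ≤ f q) :
    ∃ w ∈ Set.Icc p q, f w = z := by
  obtain ⟨a, b, hab⟩ := hf p q hpq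
  have hp : f p ∈ Set.Icc a b := hab ▸ Set.mem_image_of_mem f (Set.left_mem_Icc.2 hpq)
  have hq : f q ∈ Set.Icc a b := hab ▸ Set.mem_image_of_mem f (Set.right_mem_Icc.2 hpq)
  rw [← Set.mem_image, hab]
  exact ⟨hp.1.trans hpz, hzq.trans hq.2⟩

theorem IsIntervalPreserving.exists_mem_Icc_apply_eq_false_and_apply_eq_true {κ : Type*}
    [DecidableEq κ] {φ : α → κ → Bool} (hφ : IsIntervalPreserving φ) (hm : Monotone φ)
    {p q : α} (hpq : p ≤ q) {i j : κ} (hij : i ≠ j) (hp : φ p i = false) (hq : φ q j = true) :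
    ∃ w ∈ Set.Icc p q, φ w i = false ∧ φ w j = true := by
  set z := update (update (φ p) j true) i false
  have hpz : φ p ≤ z :=
    le_update_iff.2 ⟨hp.le, fun k _ => le_update_iff.2 ⟨Bool.le_true _, fun _ _ => le_rfl⟩ k⟩
  have hzq : z ≤ φ q :=
    update_le_iff.2 ⟨Bool.false_le _, fun k _ =>
      update_le_iff.2 ⟨hq.symm.le, fun _ _ => hm hpq _⟩ k⟩
  obtain ⟨w, hw, hwz⟩ := IsIntervalPreserving.exists_mem_Icc_eq hφ hpq hpz hzq
  exact ⟨w, hw, by simp [hwz, z], by simp [hwz, z, hij.symm]⟩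

theorem Monotone.apply_eq_true_of_le {κ : Type*} {φ : α → κ → Bool} (hm : Monotone φ)
    {x y : α} (hxy : x ≤ y) {i : κ} (hx : φ x i = true) : φ y i = true :=
  Bool.eq_true_of_true_le (hx.symm.le.trans (hm hxy i))

theorem Monotone.apply_eq_false_of_le {κ : Type*} {φ : α → κ → Bool} (hm : Monotone φ)
    {x y : α} (hxy : x ≤ y) {i : κ} (hy : φ y i = false) : φ x i = false :=
  Bool.eq_false_of_le_false ((hm hxy i).trans hy.le)

end IntervalPreserving

theorem hammingDist_lt_of_mem_Icc_inf_sup {ι : Type*} [Fintype ι] {p q u : ι → Bool}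
    (hu : u ∈ Set.Icc (p ⊓ q) (p ⊔ q)) (hup : u ≠ p) : hammingDist u q < hammingDist p q := by
  have hbetween : ∀ t, u t = p t ∨ u t = q t := fun t => by
    have h₁ : (p t && q t) ≤ u t := hu.1 t
    have h₂ : u t ≤ (p t || q t) := hu.2 t
    revert h₁ h₂
    cases p t <;> cases q t <;> cases u t <;> decide
  obtain ⟨t, ht⟩ := Function.ne_iff.1 hup
  refine Finset.card_lt_card (Finset.ssubset_iff_of_subset ?_ |>.2 ⟨t, ?_, ?_⟩)
  · intro t' ht'
    simp only [Finset.mem_filter, Finset.mem_univ, true_and] at ht' ⊢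
    rcases hbetween t' with h | h <;> simp_all
  · simp only [Finset.mem_filter, Finset.mem_univ, true_and]
    rcases hbetween t with h | h <;> simp_all [eq_comm]
  · simp only [Finset.mem_filter, Finset.mem_univ, true_and, not_not]
    rcases hbetween t with h | h <;> simp_all

section BooleanCube

variable {ι κ : Type*} [DecidableEq ι] {φ : (ι → Bool) → κ → Bool} {i j : κ} {s : ι}
  {p q : ι → Bool}

def FlipsAt (φ : (ι → Bool) → κ → Bool) (i : κ) (s : ι) (p : ι → Bool) : Prop :=
  p s = false ∧ φ p i = false ∧ φ (update p s true) i = true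

variable [DecidableEq κ]

theorem FlipsAt.apply_eq_true_of_isolated (hφ : IsIntervalPreserving φ) (hm : Monotone φ)
    (hij : i ≠ j) (hp : FlipsAt φ i s p) (hq : φ (update q s true) j = true)
    (hiso : ∀ u ∈ Set.Icc (p ⊓ q) (p ⊔ q), u ≠ p → ¬ FlipsAt φ i s u) : φ p j = true := by
  obtain ⟨-, hpi, hpi'⟩ := hp
  by_contra hpj
  rw [Bool.not_eq_true] at hpj
  have hqb : update q s true ≤ update (p ⊔ q) s true :=
    update_le_update_iff.2 ⟨le_rfl, fun _ _ => le_sup_right⟩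
  have htop : φ (update (p ⊔ q) s true) j = true := hm.apply_eq_true_of_le hqb hq
  obtain ⟨u, ⟨hpu, hub⟩, hui, huj⟩ :=
    IsIntervalPreserving.exists_mem_Icc_apply_eq_false_and_apply_eq_true hφ hm
    (le_sup_left.trans (le_update_self_iff.2 (Bool.le_true _))) hij hpi htop
  have hup_le : update p s true ≤ update u s true :=
    update_le_update_iff.2 ⟨le_rfl, fun t _ => hpu t⟩
  cases hus : u s
  · have hub' : u ≤ p ⊔ q := fun t => by
      by_cases ht : t = s
      · subst ht; simp [hus]
      · simpa [ht] using hub t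
    refine hiso u ⟨inf_le_left.trans hpu, hub'⟩ (by rintro rfl; simp_all) ⟨hus, hui, ?_⟩
    exact hm.apply_eq_true_of_le hup_le hpi'
  · have hpu' : update p s true ≤ u := update_le_iff.2 ⟨hus ▸ le_rfl, fun t _ => hpu t⟩
    simp [hm.apply_eq_true_of_le hpu' hpi'] at hui

theorem FlipsAt.false_of_isolated (hφ : IsIntervalPreserving φ) (hm : Monotone φ)
    (hij : i ≠ j) (hp : FlipsAt φ i s p) (hpj : φ p j = true) (hq : φ q j = false)
    (hiso : ∀ u ∈ Set.Icc (p ⊓ q) (p ⊔ q), u ≠ p → ¬ FlipsAt φ i s u) : False := by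
  obtain ⟨hps, hpi, hpi'⟩ := hp
  obtain ⟨u, ⟨hau, hup⟩, huj, hui⟩ :=
    IsIntervalPreserving.exists_mem_Icc_apply_eq_false_and_apply_eq_true hφ hm
      (inf_le_left.trans (le_update_self_iff.2 (Bool.le_true _))) hij.symm
      (hm.apply_eq_false_of_le inf_le_right hq) hpi'
  have hup' := (le_update_iff.1 hup).2
  cases hus : u s
  · have hu : u ≤ p := fun t => by
      by_cases ht : t = s
      · subst ht; simp [hus]
      · exact hup' t ht
    simp [hm.apply_eq_false_of_le hu hpi] at hui
  · set u' := update u s false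
    have hu : update u' s true = u := by simp [u', ← hus]
    have hu'p : u' ≤ p := update_le_iff.2 ⟨Bool.false_le _, hup'⟩
    by_cases hu'p_eq : u' = p
    · rw [hu'p_eq] at hu
      have hpj' : φ u j = true :=
        hu ▸ hm.apply_eq_true_of_le (le_update_self_iff.2 (Bool.le_true _)) hpj
      simp [hpj'] at huj
    · refine hiso u' ⟨?_, hu'p.trans le_sup_left⟩ hu'p_eq ⟨update_self .., ?_, hu ▸ hui⟩
      · exact le_update_iff.2 ⟨(inf_le_left (a := p) s).trans hps.le, fun t _ => hau t⟩
      · exact hm.apply_eq_false_of_le hu'p hpi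

theorem not_flipsAt_and_flipsAt [Fintype ι] (hφ : IsIntervalPreserving φ) (hm : Monotone φ)
    (hij : i ≠ j) : ¬ (FlipsAt φ i s p ∧ FlipsAt φ j s q) := by
  induction hd : hammingDist p q using Nat.strong_induction_on generalizing p with
  | _ n ih =>
  rintro ⟨hp, hq⟩
  have hiso : ∀ u ∈ Set.Icc (p ⊓ q) (p ⊔ q), u ≠ p → ¬ FlipsAt φ i s u := fun u hu hup hu' =>
    ih _ (hd ▸ hammingDist_lt_of_mem_Icc_inf_sup hu hup) rfl ⟨hu', hq⟩
  exact hp.false_of_isolated hφ hm hij (hp.apply_eq_true_of_isolated hφ hm hij hq.2.2 hiso)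
    hq.2.1 hiso

end BooleanCube

theorem BoolDependsOn.exists_flipsAt {m n : ℕ} {φ : (Fin m → Bool) → Fin n → Bool}
    (hm : Monotone φ) {i : Fin n} {s : Fin m} (h : BoolDependsOn φ i s) :
    ∃ p, FlipsAt φ i s p := by
  obtain ⟨x, y, hxy, hne⟩ := h
  have hy : update x s (y s) = y := by
    ext t
    by_cases ht : t = s
    · subst ht; simp
    · simp [ht, hxy t ht]
  have hedge : φ (update x s false) i ≠ φ (update x s true) i := by
    rw [← update_eq_self s x, ← hy] at hne
    revert hne
    cases x s <;> cases y s <;> simp [eq_comm]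
  have hle : φ (update x s false) i ≤ φ (update x s true) i :=
    hm (update_le_update_iff'.2 (Bool.false_le _)) i
  obtain ⟨hfalse, htrue⟩ := Bool.lt_iff.1 (lt_of_le_of_ne hle hedge)
  exact ⟨update x s false, update_self .., hfalse, by rwa [update_idem]⟩

theorem BoolDependsOn.not_and_of_ne {m n : ℕ} {φ : (Fin m → Bool) → Fin n → Bool}
    (hφ : IsIntervalPreserving φ) (hm : Monotone φ) {i j : Fin n} (hij : i ≠ j) (s : Fin m) :
    ¬ (BoolDependsOn φ i s ∧ BoolDependsOn φ j s) := by
  rintro ⟨hi, hj⟩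
  obtain ⟨p, hp⟩ := hi.exists_flipsAt hm
  obtain ⟨q, hq⟩ := hj.exists_flipsAt hm
  exact not_flipsAt_and_flipsAt hφ hm hij ⟨hp, hq⟩

theorem dependsOn_of_forall_update {ι β : Type*} {α : ι → Type*} [Fintype ι] [DecidableEq ι]
    {f : (Π i, α i) → β} {s : Set ι} (h : ∀ a ∉ s, ∀ x (v : α a), f (update x a v) = f x) :
    DependsOn f s := by
  intro x y hxy
  classical
  suffices key : ∀ T : Finset ι, ∀ x : Π i, α i, (∀ a ∉ T, x a = y a) → (∀ a ∈ T, a ∉ s) →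
      f x = f y from
    key (Finset.univ.filter (· ∉ s)) x (fun a ha => hxy a (by simpa using ha)) (by simp)
  intro T
  induction T using Finset.induction_on with
  | empty => exact fun x hx _ => congrArg f (funext fun a => hx a (Finset.notMem_empty a))
  | insert a T _ ih =>
    intro x hx hs
    rw [← h a (hs a (Finset.mem_insert_self a T)) x (y a)]
    refine ih _ (fun b hb => ?_) fun b hb => hs b (Finset.mem_insert_of_mem hb)
    by_cases hba : b = a
    · subst hba; simp
    · simp [hba, hx b (by simp [hba, hb])]

theorem dependsOn_setOf_boolDependsOn {m n : ℕ} (φ : (Fin m → Bool) → Fin n → Bool)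
    (i : Fin n) : DependsOn (fun x => φ x i) {s | BoolDependsOn φ i s} :=
  dependsOn_of_forall_update fun a ha x v => by
    by_contra hne
    exact ha ⟨update x a v, x, fun t ht => update_of_ne ht v x, hne⟩

theorem exists_perm_eq_prod_of_disjoint_boolDependsOn {n : ℕ}
    {φ : (Fin n → Bool) → Fin 2 → Bool} (hm : Monotone φ) (hsurj : Surjective φ)
    (hdisj : ∀ s, ¬ (BoolDependsOn φ 0 s ∧ BoolDependsOn φ 1 s)) :
    ∃ (m₁ m₂ : ℕ) (h : m₁ + m₂ = n) (g : Equiv.Perm (Fin n))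
      (φ₁ : (Fin m₁ → Bool) → Bool) (φ₂ : (Fin m₂ → Bool) → Bool),
      Monotone φ₁ ∧ Surjective φ₁ ∧ Monotone φ₂ ∧ Surjective φ₂ ∧
      ∀ x : Fin n → Bool,
        φ (x ∘ g) 0 = φ₁ (fun j => x (Fin.cast h (Fin.castAdd m₂ j))) ∧
        φ (x ∘ g) 1 = φ₂ (fun j => x (Fin.cast h (Fin.natAdd m₁ j))) := by
  classical
  set P : Fin n → Prop := BoolDependsOn φ 0
  set E : Fin n ≃ Fin (Fintype.card {t // P t}) ⊕ Fin (Fintype.card {t // ¬ P t}) :=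
    (Equiv.sumCompl P).symm.trans (Equiv.sumCongr (Fintype.equivFin _) (Fintype.equivFin _))
  have h : Fintype.card {t // P t} + Fintype.card {t // ¬ P t} = n := by
    simpa using (Fintype.card_congr E).symm
  set g : Equiv.Perm (Fin n) := E.trans (finSumFinEquiv.trans (finCongr h))
  have hE₀ : ∀ t, P t → ∃ j, E t = Sum.inl j := fun t ht =>
    ⟨Fintype.equivFin _ ⟨t, ht⟩, by simp [E, Equiv.sumCompl_symm_apply_of_pos ht]⟩
  have hE₁ : ∀ t, ¬ P t → ∃ k, E t = Sum.inr k := fun t ht =>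
    ⟨Fintype.equivFin _ ⟨t, ht⟩, by simp [E, Equiv.sumCompl_symm_apply_of_neg ht]⟩
  set φ₁ := fun v => φ (fun t => Sum.elim v (fun _ => false) (E t)) 0
  set φ₂ := fun w => φ (fun t => Sum.elim (fun _ => false) w (E t)) 1
  have hprod : ∀ x : Fin n → Bool,
      φ (x ∘ g) 0 = φ₁ (fun j => x (Fin.cast h (Fin.castAdd _ j))) ∧
      φ (x ∘ g) 1 = φ₂ (fun j => x (Fin.cast h (Fin.natAdd _ j))) := fun x => by
    refine ⟨dependsOn_setOf_boolDependsOn φ 0 fun t ht => ?_,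
      dependsOn_setOf_boolDependsOn φ 1 fun t ht => ?_⟩
    · obtain ⟨j, hj⟩ := hE₀ t ht
      simp [g, hj]
    · obtain ⟨k, hk⟩ := hE₁ t fun h0 => hdisj t ⟨h0, ht⟩
      simp [g, hk]
  have hattained : ∀ k : Fin 2, ∀ c, ∃ y, φ (y ∘ g) k = c := fun k c => by
    obtain ⟨y, hy⟩ := hsurj fun _ => c
    exact ⟨y ∘ g.symm, by simp [Function.comp_assoc, hy]⟩
  refine ⟨_, _, h, g, φ₁, φ₂, fun v v' hv => hm (fun t => ?_) 0, fun c => ?_,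
    fun w w' hw => hm (fun t => ?_) 1, fun c => ?_, hprod⟩
  · rcases E t with j | k
    exacts [hv j, le_rfl]
  · obtain ⟨y, hy⟩ := hattained 0 c
    exact ⟨_, (hprod y).1.symm.trans hy⟩
  · rcases E t with j | k
    exacts [le_rfl, hw k]
  · obtain ⟨y, hy⟩ := hattained 1 c
    exact ⟨_, (hprod y).2.symm.trans hy⟩

/-- A surjective interval-preserving monotone `φ : [1]^{m+2} → [1]²`
decomposes, after a coordinate permutation of the domain, as a product `φ₁ × φ₂` of two
surjective monotone maps; in particular, for any surjective interval-preserving monotone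
`φ : [1]^m → [1]^n` and distinct output coordinates `i ≠ j`, the sets of input
coordinates on which the `i`-th and `j`-th components depend are disjoint. -/
theorem stmt_18 :
    (∀ (m : ℕ) (φ : (Fin (m + 2) → Bool) → (Fin 2 → Bool)), Monotone φ →
      Function.Surjective φ → IsIntervalPreserving φ →
      ∃ (m₁ m₂ : ℕ) (h : m₁ + m₂ = m + 2) (g : Equiv.Perm (Fin (m + 2)))
        (φ₁ : (Fin m₁ → Bool) → Bool) (φ₂ : (Fin m₂ → Bool) → Bool),
        Monotone φ₁ ∧ Function.Surjective φ₁ ∧ Monotone φ₂ ∧ Function.Surjective φ₂ ∧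
        ∀ x : Fin (m + 2) → Bool,
          φ (x ∘ g) 0 = φ₁ (fun j => x (Fin.cast h (Fin.castAdd m₂ j))) ∧
          φ (x ∘ g) 1 = φ₂ (fun j => x (Fin.cast h (Fin.natAdd m₁ j)))) ∧
    (∀ (m n : ℕ) (φ : (Fin m → Bool) → (Fin n → Bool)), Monotone φ →
      Function.Surjective φ → IsIntervalPreserving φ →
      ∀ i j : Fin n, i ≠ j → ∀ s : Fin m, ¬ (BoolDependsOn φ i s ∧ BoolDependsOn φ j s)) :=
  ⟨fun _ _ hm hsurj hφ => exists_perm_eq_prod_of_disjoint_boolDependsOn hm hsurj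
      (BoolDependsOn.not_and_of_ne hφ hm (by decide)),
    fun _ _ _ hm _ hφ _ _ hij s => BoolDependsOn.not_and_of_ne hφ hm hij s⟩
end
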